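/- arXiv:2008.02156 — 8 statements merged into one kernel-verified Lean document; each statement's English description precedes it below -/
import Mathlib

section
/- Let X and Y be vector spaces over ℝ, each containing a nonzero vector. Then there exists a map f : X → Y which is NOT ℝ-linear but satisfies: (i) for every line L ⊆ X, the image f '' L is either a point or a line in Y; (ii) for every line L ⊆ X, if f '' L is a line in Y then the restriction of f to L is injective; and (iii) f(0) = 0. -/
lemma cube_surj : Function.Surjective (fun x : ℝ => x ^ 3) := by
  intro y
  rcases le_or_gt 0 y with h | h
  · refine ⟨y ^ ((1:ℝ)/3), ?_⟩
    have : (y ^ ((1:ℝ)/3)) ^ (3:ℕ) = y ^ (((1:ℝ)/3) * 3) := by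
      rw [← Real.rpow_natCast (y ^ ((1:ℝ)/3)) 3, ← Real.rpow_mul h]
      norm_num
    simpa using this
  · refine ⟨-((-y) ^ ((1:ℝ)/3)), ?_⟩
    have h' : (0:ℝ) ≤ -y := by linarith
    have : ((-y) ^ ((1:ℝ)/3)) ^ (3:ℕ) = (-y) ^ (((1:ℝ)/3) * 3) := by
      rw [← Real.rpow_natCast ((-y) ^ ((1:ℝ)/3)) 3, ← Real.rpow_mul h']
      norm_num
    have := this
    simp only [one_div, isUnit_iff_ne_zero, ne_eq, OfNat.ofNat_ne_zero,
      not_false_eq_true, IsUnit.inv_mul_cancel, Real.rpow_one] at this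
    show (-((-y) ^ ((1:ℝ)/3))) ^ 3 = y
    have e : (-((-y) ^ ((1:ℝ)/3))) ^ 3 = -(((-y) ^ ((1:ℝ)/3)) ^ 3) := by ring
    rw [e]
    norm_num at this ⊢
    rw [this, neg_neg]

lemma cube_inj : Function.Injective (fun x : ℝ => x ^ 3) :=
  (Odd.strictMono_pow (⟨1, by norm_num⟩ : Odd 3)).injective

def IsLine {X : Type*} [AddCommGroup X] [Module ℝ X] (L : Set X) : Prop :=
  ∃ o d : X, d ≠ 0 ∧ L = {x | ∃ r : ℝ, x = r • d + o}

def IsPoint {X : Type*} (S : Set X) : Prop := ∃ p : X, S = {p}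

lemma singleton_not_line {Y : Type*} [AddCommGroup Y] [Module ℝ Y] (p : Y) :
    ¬ IsLine ({p} : Set Y) := by
  rintro ⟨o, d, hd, hL⟩
  have h0 : o ∈ ({p} : Set Y) := by rw [hL]; exact ⟨0, by simp⟩
  have h1 : d + o ∈ ({p} : Set Y) := by rw [hL]; exact ⟨1, by simp⟩
  simp only [Set.mem_singleton_iff] at h0 h1
  apply hd
  have := h1.trans h0.symm
  simpa using this

theorem exists_nonlinear_line_preserving_map
    {X Y : Type*} [AddCommGroup X] [Module ℝ X] [AddCommGroup Y] [Module ℝ Y]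
    (hX : ∃ x : X, x ≠ 0) (hY : ∃ y : Y, y ≠ 0) :
    ∃ f : X → Y,
      ¬ ((∀ (c : ℝ) (a : X), f (c • a) = c • f a) ∧
          (∀ a b : X, f (a + b) = f a + f b)) ∧
      (∀ L : Set X, IsLine L → IsPoint (f '' L) ∨ IsLine (f '' L)) ∧
      (∀ L : Set X, IsLine L → IsLine (f '' L) → Set.InjOn f L) ∧
      f 0 = 0 := by
  obtain ⟨x0, hx0⟩ := hX
  obtain ⟨y0, hy0⟩ := hY
  have hx0' : x0 ∉ (⊥ : Submodule ℝ X) := by simpa using hx0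
  obtain ⟨ℓ, hℓ, -⟩ := Submodule.exists_dual_map_eq_bot_of_notMem hx0' inferInstance
  refine ⟨fun x => (ℓ x) ^ 3 • y0, ?_, ?_, ?_, by simp⟩
  · rintro ⟨hsmul, -⟩
    have h := hsmul (2 : ℝ) x0
    simp only [map_smul, smul_eq_mul, mul_pow] at h
    rw [smul_smul] at h
    have : ((2:ℝ) ^ 3 * ℓ x0 ^ 3 - 2 * ℓ x0 ^ 3) • y0 = 0 := by
      rw [sub_smul, h, sub_self]
    rcases smul_eq_zero.mp this with hc | hc
    · have : ℓ x0 = 0 := by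
        have h3 : (ℓ x0 : ℝ) ^ 3 = 0 := by nlinarith [hc]
        exact pow_eq_zero_iff (n := 3) (by norm_num) |>.mp h3
      exact hℓ this
    · exact hy0 hc
  · rintro L ⟨o, d, hd, hL⟩
    rcases eq_or_ne (ℓ d) 0 with hld | hld
    · left
      refine ⟨(ℓ o) ^ 3 • y0, ?_⟩
      ext y
      simp only [Set.mem_image, hL, Set.mem_setOf_eq, Set.mem_singleton_iff]
      constructor
      · rintro ⟨x, ⟨r, rfl⟩, rfl⟩
        simp [hld]
      · rintro rfl
        exact ⟨o, ⟨0, by simp⟩, by simp⟩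
    · right
      refine ⟨0, y0, hy0, ?_⟩
      ext y
      simp only [Set.mem_image, hL, Set.mem_setOf_eq]
      constructor
      · rintro ⟨x, ⟨r, rfl⟩, rfl⟩
        exact ⟨(ℓ (r • d + o)) ^ 3, by simp⟩
      · rintro ⟨s, rfl⟩
        obtain ⟨t, ht⟩ := cube_surj s
        refine ⟨((t - ℓ o) / ℓ d) • d + o, ⟨_, rfl⟩, ?_⟩
        simp only [map_add, map_smul, smul_eq_mul]
        rw [div_mul_cancel₀ _ hld]
        simp only [sub_add_cancel]
        rw [show (t : ℝ) ^ 3 = s from ht]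
        simp
  · rintro L ⟨o, d, hd, hL⟩ himg
    have hld : ℓ d ≠ 0 := by
      intro hld
      apply singleton_not_line ((ℓ o) ^ 3 • y0 : Y)
      have himg2 : (fun x => (ℓ x) ^ 3 • y0) '' L = {(ℓ o) ^ 3 • y0} := by
        ext y
        simp only [Set.mem_image, hL, Set.mem_setOf_eq, Set.mem_singleton_iff]
        constructor
        · rintro ⟨x, ⟨r, rfl⟩, rfl⟩; simp [hld]
        · rintro rfl; exact ⟨o, ⟨0, by simp⟩, by simp⟩
      rwa [himg2] at himg
    rintro a ha b hb hab
    rw [hL] at ha hb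
    obtain ⟨ra, rfl⟩ := ha
    obtain ⟨rb, rfl⟩ := hb
    simp only [map_add, map_smul, smul_eq_mul] at hab
    have h1 : (ra * ℓ d + ℓ o) ^ 3 = (rb * ℓ d + ℓ o) ^ 3 := by
      by_contra hne
      have h2 : ((ra * ℓ d + ℓ o) ^ 3 - (rb * ℓ d + ℓ o) ^ 3) • y0 = 0 := by
        rw [sub_smul, hab, sub_self]
      rcases smul_eq_zero.mp h2 with hc | hc
      · exact hne (by linarith [hc])
      · exact absurd hc hy0
    have h2 := cube_inj h1
    have hr : ra = rb := by
      have := mul_right_cancel₀ hld (by linarith [h2] : ra * ℓ d = rb * ℓ d)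
      exact this
    rw [hr]
end

section
/- Let X and Y be vector spaces over ℝ and let f : X → Y satisfy: (i) f(0) = 0, and (ii) for all a, b ∈ X with a ≠ b and f(a) ≠ f(b), all c ∈ X, and all r, s ∈ ℝ with r + s ≠ 0, if c divides the segment from a to b in ratio r : s then f(c) divides the segment from f(a) to f(b) in ratio r : s. Then f is ℝ-linear. -/
/-!
Since `f a ≠ f b` already forces `a ≠ b`, the hypothesis says that `f` maps the line through any
two points with distinct images affinely onto the line through those images. Lines through `0`
give homogeneity (if `f a = 0` but `f (t • a) ≠ 0`, scaling `t • a` back by `t⁻¹` contradicts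
`f a = 0`), and midpoints then give `f (a + b) = f a + f b` whenever `f a ≠ f b`. When
`f a = f b`, the same fact applied to the pairs `(a + b, -b)`, `(a, -b)` and `(a + b, a - b)`
either gives additivity or forces `3 • f a = 0`.
-/

/-- `c` divides the segment from `a` to `b` in ratio `r : s`. -/
def DividesInRatio {X : Type*} [AddCommGroup X] [Module ℝ X]
    (a b c : X) (r s : ℝ) : Prop :=
  c = (r / (r + s)) • (b - a) + a

open AffineMap

def PreservesRatios {X Y : Type*} [AddCommGroup X] [Module ℝ X] [AddCommGroup Y] [Module ℝ Y]
    (f : X → Y) : Prop :=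
  ∀ (a b c : X) (r s : ℝ), a ≠ b → f a ≠ f b → r + s ≠ 0 →
    DividesInRatio a b c r s → DividesInRatio (f a) (f b) (f c) r s

theorem dividesInRatio_lineMap {X : Type*} [AddCommGroup X] [Module ℝ X] (a b : X) (t : ℝ) :
    DividesInRatio a b (lineMap a b t) t (1 - t) := by
  simp [DividesInRatio, lineMap_apply_module']

namespace PreservesRatios

variable {X Y : Type*} [AddCommGroup X] [Module ℝ X] [AddCommGroup Y] [Module ℝ Y] {f : X → Y}

theorem map_lineMap (hf : PreservesRatios f) {a b : X} (hab : f a ≠ f b) (t : ℝ) :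
    f (lineMap a b t) = lineMap (f a) (f b) t := by
  have h := hf a b _ t (1 - t) (ne_of_apply_ne f hab) hab (by simp) (dividesInRatio_lineMap a b t)
  simpa [DividesInRatio, ← lineMap_apply_module'] using h

theorem map_smul_of_map_ne_zero (hf : PreservesRatios f) (h0 : f 0 = 0) {a : X} (ha : f a ≠ 0)
    (t : ℝ) : f (t • a) = t • f a := by
  simpa [lineMap_apply_module', h0] using hf.map_lineMap (a := 0) (h0 ▸ ha.symm) t

theorem map_smul (hf : PreservesRatios f) (h0 : f 0 = 0) (t : ℝ) (a : X) :
    f (t • a) = t • f a := by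
  by_cases ha : f a = 0
  · by_cases ht : t = 0
    · simp [ht, h0]
    by_contra hta
    rw [ha, smul_zero] at hta
    apply smul_ne_zero (inv_ne_zero ht) hta
    rw [← hf.map_smul_of_map_ne_zero h0 hta, inv_smul_smul₀ ht, ha]
  · exact hf.map_smul_of_map_ne_zero h0 ha t

theorem map_neg (hf : PreservesRatios f) (h0 : f 0 = 0) (a : X) : f (-a) = -f a := by
  simpa using hf.map_smul h0 (-1) a

theorem map_add_of_map_ne (hf : PreservesRatios f) (h0 : f 0 = 0) {a b : X} (hab : f a ≠ f b) :
    f (a + b) = f a + f b := by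
  have hmid : a + b = (2 : ℝ) • lineMap a b (1 / 2 : ℝ) := by
    rw [lineMap_apply_module']
    module
  rw [hmid, hf.map_smul h0, hf.map_lineMap hab, lineMap_apply_module']
  module

theorem map_add (hf : PreservesRatios f) (h0 : f 0 = 0) (a b : X) : f (a + b) = f a + f b := by
  by_cases hab : f a = f b
  swap
  · exact hf.map_add_of_map_ne h0 hab
  by_cases hb : f (a + b) = f (-b)
  swap
  · have h := hf.map_add_of_map_ne h0 hb
    rw [add_neg_cancel_right, hf.map_neg h0] at h
    rw [h]
    abel
  rw [hf.map_neg h0] at hb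
  by_cases ha : f a = 0
  · rw [hb, ← hab, ha, neg_zero, add_zero]
  exfalso
  have : IsAddTorsionFree Y := .of_isTorsionFree ℝ Y
  have hsub : f (a - b) = 0 := by
    rw [sub_eq_add_neg, hf.map_add_of_map_ne h0, hf.map_neg h0, hab, add_neg_cancel]
    rwa [hf.map_neg h0, ← hab, ne_eq, self_eq_neg]
  have h2a := hf.map_add_of_map_ne h0 (a := a + b) (b := a - b)
    (by rwa [hsub, hb, ← hab, neg_ne_zero])
  rw [show a + b + (a - b) = (2 : ℝ) • a by module, hf.map_smul h0, hsub, hb, ← hab] at h2a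
  have h3a : (3 : ℝ) • f a = 0 := by linear_combination (norm := module) h2a
  exact ha (by simpa using h3a)

end PreservesRatios

theorem linear_of_ratio_preserving
    {X Y : Type*} [AddCommGroup X] [Module ℝ X] [AddCommGroup Y] [Module ℝ Y]
    (f : X → Y) (h0 : f 0 = 0)
    (hdiv : ∀ (a b c : X) (r s : ℝ), a ≠ b → f a ≠ f b → r + s ≠ 0 →
      DividesInRatio a b c r s → DividesInRatio (f a) (f b) (f c) r s) :
    (∀ (c : ℝ) (a : X), f (c • a) = c • f a) ∧
      (∀ a b : X, f (a + b) = f a + f b) :=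
  ⟨PreservesRatios.map_smul hdiv h0, PreservesRatios.map_add hdiv h0⟩
end

section
/- Let m, n be natural numbers and let f : ℝ^m → ℝ^n be an additive function (f(a + b) = f(a) + f(b) for all a, b). If f is Lebesgue measurable, then f is ℝ-linear, i.e. f(c • a) = c • f(a) for all a ∈ ℝ^m and c ∈ ℝ. -/
open MeasureTheory Metric Bornology Pointwise Topology

/-!
Some preimage `f ⁻¹' ball 0 r` of a null-measurable additive map `f` has positive measure, since
these preimages cover the space. By Steinhaus' theorem the difference set of a measurable subset of
it of the same measure is a neighbourhood of `0`, and `f` maps it into the bounded set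
`ball 0 r - ball 0 r`. An additive map bounded near `0` is continuous, and a continuous additive
map between real vector spaces is `ℝ`-linear.
-/

namespace AddMonoidHom

variable {G H : Type*} [SeminormedAddCommGroup G] [MeasurableSpace G] [BorelSpace G]
  [LocallyCompactSpace G] [SeminormedAddCommGroup H] [MeasurableSpace H] [OpensMeasurableSpace H]
  (μ : Measure G) [μ.IsAddHaarMeasure] [μ.InnerRegular]

theorem exists_nhds_zero_isBounded_image_of_nullMeasurable (f : G →+ H)
    (hf : NullMeasurable f μ) : ∃ s ∈ 𝓝 (0 : G), IsBounded (f '' s) := by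
  obtain ⟨r, hr⟩ : ∃ r : ℕ, 0 < μ (f ⁻¹' ball 0 r) := by
    by_contra! h
    have : μ (⋃ r : ℕ, f ⁻¹' ball 0 r) = 0 := measure_iUnion_null fun r ↦ nonpos_iff_eq_zero.1 (h r)
    rw [← Set.preimage_iUnion, iUnion_ball_nat, Set.preimage_univ] at this
    exact (Measure.measure_univ_pos.2 (NeZero.ne μ)).ne' this
  obtain ⟨s, hs_sub, hs_meas, hs_ae⟩ := (hf measurableSet_ball).exists_measurable_subset_ae_eq
  refine ⟨s - s, Measure.sub_mem_nhds_zero_of_addHaar_pos μ s hs_meas (by rwa [measure_congr hs_ae]),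
    ?_⟩
  have hbdd : IsBounded (f '' s) :=
    isBounded_ball.subset ((Set.image_mono hs_sub).trans (Set.image_preimage_subset _ _))
  rw [Set.image_sub]
  exact hbdd.sub hbdd

theorem continuous_of_nullMeasurable [NormedSpace ℝ H] (f : G →+ H) (hf : NullMeasurable f μ) :
    Continuous f :=
  let ⟨_s, hs, hbdd⟩ := f.exists_nhds_zero_isBounded_image_of_nullMeasurable μ hf
  f.continuous_of_isBounded_nhds_zero hs hbdd

end AddMonoidHom

theorem linear_of_additive_measurable (m n : ℕ)
    (f : EuclideanSpace ℝ (Fin m) → EuclideanSpace ℝ (Fin n))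
    (hadd : ∀ a b, f (a + b) = f a + f b)
    (hmeas : NullMeasurable f (volume : Measure (EuclideanSpace ℝ (Fin m)))) :
    ∀ (c : ℝ) (a : EuclideanSpace ℝ (Fin m)), f (c • a) = c • f a :=
  let F := AddMonoidHom.mk' f hadd
  map_real_smul F (F.continuous_of_nullMeasurable volume hmeas)
end

section
/- Let X and Y be vector spaces over ℝ and let f : X → Y be an additive function (f(a + b) = f(a) + f(b) for all a, b ∈ X). If there exists a function φ : ℝ → ℝ such that f(r • a) = φ(r) • f(a) for all a ∈ X and r ∈ ℝ, then f is ℝ-linear, i.e. f(r • a) = r • f(a) for all a ∈ X and r ∈ ℝ. -/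
theorem linear_of_additive_and_scaling
    {X Y : Type*} [AddCommGroup X] [Module ℝ X] [AddCommGroup Y] [Module ℝ Y]
    (f : X → Y) (hadd : ∀ a b : X, f (a + b) = f a + f b)
    (hφ : ∃ φ : ℝ → ℝ, ∀ (r : ℝ) (a : X), f (r • a) = φ r • f a) :
    ∀ (r : ℝ) (a : X), f (r • a) = r • f a := by
  obtain ⟨φ, hφ⟩ := hφ
  by_cases h0 : ∀ a : X, f a = 0
  · intro r a; rw [h0, h0, smul_zero]
  push_neg at h0
  obtain ⟨a₀, ha₀⟩ := h0
  have cancel : ∀ c d : ℝ, c • f a₀ = d • f a₀ → c = d := by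
    intro c d h
    have h' : (c - d) • f a₀ = 0 := by rw [sub_smul, h, sub_self]
    rcases smul_eq_zero.mp h' with h | h
    · exact sub_eq_zero.mp h
    · exact absurd h ha₀
  have hadd' : ∀ r s : ℝ, φ (r + s) = φ r + φ s := by
    intro r s
    apply cancel
    rw [add_smul, ← hφ, ← hφ, ← hφ, ← hadd, add_smul]
  have hmul : ∀ r s : ℝ, φ (r * s) = φ r * φ s := by
    intro r s
    apply cancel
    rw [mul_smul, ← hφ, ← hφ, ← hφ, mul_smul]
  have h1 : φ 1 = 1 := by
    apply cancel; rw [← hφ, one_smul, one_smul]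
  have h0' : φ 0 = 0 := by
    have := hadd' 0 0
    simp at this
    linarith [this]
  let ψ : ℝ →+* ℝ :=
    { toFun := φ, map_one' := h1, map_mul' := hmul,
      map_zero' := h0', map_add' := hadd' }
  have hψ : ∀ r : ℝ, φ r = r := fun r =>
    RingHom.congr_fun (Subsingleton.elim ψ (RingHom.id ℝ)) r
  intro r a
  rw [hφ, hψ]
end

section
/- Let X and Y be vector spaces over ℝ and let f : X → Y satisfy: (i) for every line L ⊆ X, the image f '' L is either a point or a line in Y, and (ii) for every line L ⊆ X, if f '' L is a line in Y then the restriction of f to L is injective. Then for every plane E ⊆ X, the image f '' E is either a plane, a line, or a point in Y; moreover, if f '' E is a plane, then the restriction of f to E is injective. -/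
def IsPlane {X : Type*} [AddCommGroup X] [Module ℝ X] (E : Set X) : Prop :=
  ∃ o d₁ d₂ : X, (∀ r s : ℝ, r • d₁ + s • d₂ = 0 → r = 0 ∧ s = 0) ∧
    E = {x | ∃ r s : ℝ, x = r • d₁ + s • d₂ + o}

/-!
Call a set line-closed if it contains the line through any two of its points. Since `f` collapses
every line on which it takes some value twice, preimages of line-closed sets under `f` are
line-closed, and so is the image of `f`. Parametrize the plane by a 2-dimensional space, where a
line-closed set containing three non-collinear points is everything. If `f` identifies two points
of the plane, the preimage of the line through their common value and any other value is therefore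
the whole plane, so the image lies on a line. If instead some three values are non-collinear, the
plane through them contains the image, because its preimage is everything, and is contained in it,
because the image is line-closed.
-/

open Set Function

lemma IsPoint.eq_of_mem {α : Type*} {S : Set α} (hS : IsPoint S) {a b : α} (ha : a ∈ S)
    (hb : b ∈ S) : a = b := by
  obtain ⟨p, rfl⟩ := hS
  exact ha.trans hb.symm

section Geometry

variable {M : Type*} [AddCommGroup M] [Module ℝ M]

def lineThrough (a b : M) : Set M := {x | ∃ t : ℝ, x = t • (b - a) + a}

def planeThrough (a b c : M) : Set M := {x | ∃ r s : ℝ, x = r • (b - a) + s • (c - a) + a}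

lemma left_mem_lineThrough (a b : M) : a ∈ lineThrough a b := ⟨0, by simp⟩

lemma right_mem_lineThrough (a b : M) : b ∈ lineThrough a b := ⟨1, by simp⟩

lemma lineThrough_self (a : M) : lineThrough a a = {a} := by
  ext x
  simp [lineThrough]

lemma isLine_lineThrough {a b : M} (h : a ≠ b) : IsLine (lineThrough a b) :=
  ⟨a, b - a, sub_ne_zero.2 h.symm, rfl⟩

lemma IsLine.eq_lineThrough {L : Set M} (hL : IsLine L) {a b : M}
    (ha : a ∈ L) (hb : b ∈ L) (hab : a ≠ b) : L = lineThrough a b := by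
  obtain ⟨o, d, -, rfl⟩ := hL
  obtain ⟨ra, rfl⟩ := ha
  obtain ⟨rb, rfl⟩ := hb
  have hr : rb - ra ≠ 0 := fun h => hab (by rw [sub_eq_zero.1 h])
  ext x
  constructor
  · rintro ⟨r, rfl⟩
    exact ⟨(r - ra) / (rb - ra), by match_scalars <;> field_simp <;> ring⟩
  · rintro ⟨t, rfl⟩
    exact ⟨t * (rb - ra) + ra, by module⟩

lemma linearIndependent_of_notMem_lineThrough {a b c : M} (hab : a ≠ b)
    (hc : c ∉ lineThrough a b) : LinearIndependent ℝ ![b - a, c - a] :=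
  (LinearIndependent.pair_iff' (sub_ne_zero.2 hab.symm)).2 fun t ht =>
    hc ⟨t, by rw [ht, sub_add_cancel]⟩

lemma isPlane_planeThrough {a b c : M} (hab : a ≠ b) (hc : c ∉ lineThrough a b) :
    IsPlane (planeThrough a b c) :=
  ⟨a, b - a, c - a, LinearIndependent.pair_iff.1 (linearIndependent_of_notMem_lineThrough hab hc),
    rfl⟩

lemma IsPlane.exists_notMem_lineThrough {P : Set M} (hP : IsPlane P) :
    ∃ a ∈ P, ∃ b ∈ P, ∃ c ∈ P, a ≠ b ∧ c ∉ lineThrough a b := by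
  obtain ⟨o, d₁, d₂, hind, rfl⟩ := hP
  refine ⟨o, ⟨0, 0, by simp⟩, d₁ + o, ⟨1, 0, by simp⟩, d₂ + o, ⟨0, 1, by simp⟩, ?_, ?_⟩
  · intro h
    exact one_ne_zero (hind 1 0 (by linear_combination (norm := module) -h)).1
  · rintro ⟨t, ht⟩
    exact absurd (hind t (-1) (by linear_combination (norm := module) -ht)).2 (by norm_num)

lemma planeThrough_eq_univ {a b c : M} (hM : Module.finrank ℝ M = 2) (hab : a ≠ b)
    (hc : c ∉ lineThrough a b) : planeThrough a b c = univ := by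
  have hspan : Submodule.span ℝ {b - a, c - a} = ⊤ := by
    rw [← Matrix.range_cons_cons_empty _ _ ![]]
    exact (linearIndependent_of_notMem_lineThrough hab hc).span_eq_top_of_card_eq_finrank
      (by simp [hM])
  refine eq_univ_of_forall fun x => ?_
  obtain ⟨r, s, hrs⟩ := Submodule.mem_span_pair.1 (hspan ▸ Submodule.mem_top : x - a ∈ _)
  exact ⟨r, s, by rw [hrs, sub_add_cancel]⟩

def IsLineClosed (S : Set M) : Prop := ∀ ⦃a⦄, a ∈ S → ∀ ⦃b⦄, b ∈ S → lineThrough a b ⊆ S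

lemma isLineClosed_lineThrough (a b : M) : IsLineClosed (lineThrough a b) := by
  rintro _ ⟨t₁, rfl⟩ _ ⟨t₂, rfl⟩ _ ⟨t, rfl⟩
  exact ⟨t₁ + t * (t₂ - t₁), by module⟩

lemma isLineClosed_planeThrough (a b c : M) : IsLineClosed (planeThrough a b c) := by
  rintro _ ⟨r₁, s₁, rfl⟩ _ ⟨r₂, s₂, rfl⟩ _ ⟨t, rfl⟩
  exact ⟨r₁ + t * (r₂ - r₁), s₁ + t * (s₂ - s₁), by module⟩

lemma IsLineClosed.planeThrough_subset {S : Set M} (hS : IsLineClosed S) {a b c : M}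
    (ha : a ∈ S) (hb : b ∈ S) (hc : c ∈ S) : planeThrough a b c ⊆ S := by
  rintro _ ⟨r, s, rfl⟩
  -- the point is the midpoint of `a + 2r (b - a)` and `a + 2s (c - a)`
  have hb' : (2 * r) • (b - a) + a ∈ S := hS ha hb ⟨2 * r, rfl⟩
  have hc' : (2 * s) • (c - a) + a ∈ S := hS ha hc ⟨2 * s, rfl⟩
  exact hS hb' hc' ⟨1 / 2, by module⟩

lemma IsLineClosed.eq_univ {S : Set M} (hS : IsLineClosed S) (hM : Module.finrank ℝ M = 2)
    {a b c : M} (ha : a ∈ S) (hb : b ∈ S) (hc : c ∈ S) (hab : a ≠ b)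
    (hcab : c ∉ lineThrough a b) : S = univ :=
  eq_univ_of_univ_subset (planeThrough_eq_univ hM hab hcab ▸ hS.planeThrough_subset ha hb hc)

end Geometry

section Maps

variable {V W Y : Type*} [AddCommGroup V] [Module ℝ V] [AddCommGroup W] [Module ℝ W]
  [AddCommGroup Y] [Module ℝ Y]

def MapsLinesToPointsOrLines (g : V → Y) : Prop :=
  ∀ L : Set V, IsLine L → IsPoint (g '' L) ∨ IsLine (g '' L)

def InjOnLinesWithLineImage (g : V → Y) : Prop :=
  ∀ L : Set V, IsLine L → IsLine (g '' L) → InjOn g L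

lemma IsLine.image_of_injective {L : Set W} (hL : IsLine L) {φ : W →ᵃ[ℝ] V}
    (hφ : Injective φ) : IsLine (φ '' L) := by
  obtain ⟨o, d, hd, rfl⟩ := hL
  have hφd : φ.linear d ≠ 0 := fun h => hd <| by
    simpa using hφ (show φ (d +ᵥ o) = φ o by rw [φ.map_vadd, h, zero_vadd])
  refine ⟨φ o, φ.linear d, hφd, ?_⟩
  ext x
  constructor
  · rintro ⟨_, ⟨r, rfl⟩, rfl⟩
    exact ⟨r, by rw [← vadd_eq_add, φ.map_vadd, map_smul, vadd_eq_add]⟩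
  · rintro ⟨r, rfl⟩
    exact ⟨r • d + o, ⟨r, rfl⟩, by rw [← vadd_eq_add, φ.map_vadd, map_smul, vadd_eq_add]⟩

variable {g : V → Y}

lemma MapsLinesToPointsOrLines.comp (hg : MapsLinesToPointsOrLines g) {φ : W →ᵃ[ℝ] V}
    (hφ : Injective φ) : MapsLinesToPointsOrLines (g ∘ φ) := fun L hL => by
  rw [image_comp]
  exact hg _ (hL.image_of_injective hφ)

lemma InjOnLinesWithLineImage.comp (hg : InjOnLinesWithLineImage g) {φ : W →ᵃ[ℝ] V}
    (hφ : Injective φ) : InjOnLinesWithLineImage (g ∘ φ) := fun L hL hgL => by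
  rw [image_comp] at hgL
  exact (hg _ (hL.image_of_injective hφ) hgL).comp hφ.injOn (mapsTo_image φ L)

lemma image_lineThrough (hg : MapsLinesToPointsOrLines g) {x y : V} (h : g x ≠ g y) :
    g '' lineThrough x y = lineThrough (g x) (g y) := by
  have hx := mem_image_of_mem g (left_mem_lineThrough x y)
  have hy := mem_image_of_mem g (right_mem_lineThrough x y)
  rcases hg _ (isLine_lineThrough fun hxy => h (congrArg g hxy)) with hpt | hline
  · exact absurd (hpt.eq_of_mem hx hy) h
  · exact hline.eq_lineThrough hx hy h

lemma apply_eq_of_mem_lineThrough (hg₁ : MapsLinesToPointsOrLines g)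
    (hg₂ : InjOnLinesWithLineImage g) {x y z : V} (hxy : g x = g y)
    (hz : z ∈ lineThrough x y) : g z = g x := by
  by_cases hne : x = y
  · rw [hne, lineThrough_self] at hz
    rw [hz, hne]
  have hL := isLine_lineThrough hne
  rcases hg₁ _ hL with hpt | hline
  · exact hpt.eq_of_mem (mem_image_of_mem g hz) (mem_image_of_mem g (left_mem_lineThrough x y))
  · exact absurd (hg₂ _ hL hline (left_mem_lineThrough x y) (right_mem_lineThrough x y) hxy) hne

lemma isLineClosed_range (hg : MapsLinesToPointsOrLines g) : IsLineClosed (range g) := by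
  rintro _ ⟨x, rfl⟩ _ ⟨y, rfl⟩
  by_cases hxy : g x = g y
  · rw [hxy, lineThrough_self]
    exact singleton_subset_iff.2 (mem_range_self y)
  · rw [← image_lineThrough hg hxy]
    exact image_subset_range g _

lemma IsLineClosed.preimage (hg₁ : MapsLinesToPointsOrLines g)
    (hg₂ : InjOnLinesWithLineImage g) {S : Set Y} (hS : IsLineClosed S) :
    IsLineClosed (g ⁻¹' S) := by
  intro x hx y hy z hz
  by_cases hxy : g x = g y
  · rw [mem_preimage, apply_eq_of_mem_lineThrough hg₁ hg₂ hxy hz]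
    exact hx
  · exact hS hx hy (image_lineThrough hg₁ hxy ▸ mem_image_of_mem g hz)

end Maps

section PlaneDomain

variable {V Y : Type*} [AddCommGroup V] [Module ℝ V] [AddCommGroup Y] [Module ℝ Y] {g : V → Y}

lemma mem_lineThrough_of_not_injective (hV : Module.finrank ℝ V = 2)
    (hg₁ : MapsLinesToPointsOrLines g) (hg₂ : InjOnLinesWithLineImage g) (hg : ¬ Injective g)
    {x y w : V} (hxy : g x ≠ g y) : g w ∈ lineThrough (g x) (g y) := by
  obtain ⟨z₁, z₂, hz, hne⟩ : ∃ z₁ z₂, g z₁ = g z₂ ∧ z₁ ≠ z₂ := by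
    simpa [Injective] using hg
  obtain ⟨u, hu⟩ : ∃ u, g u ≠ g z₁ := by
    by_contra! h
    exact hxy ((h x).trans (h y).symm)
  have hu_off : u ∉ lineThrough z₁ z₂ := fun h => hu (apply_eq_of_mem_lineThrough hg₁ hg₂ hz h)
  have hN := ((isLineClosed_lineThrough (g z₁) (g u)).preimage hg₁ hg₂).eq_univ hV
    (left_mem_lineThrough _ _) (hz ▸ left_mem_lineThrough _ _ : z₂ ∈ g ⁻¹' _)
    (right_mem_lineThrough _ _) hne hu_off
  have hrange : ∀ z, g z ∈ lineThrough (g z₁) (g u) := eq_univ_iff_forall.1 hN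
  rw [← (isLine_lineThrough hu.symm).eq_lineThrough (hrange x) (hrange y) hxy]
  exact hrange w

lemma range_eq_planeThrough (hV : Module.finrank ℝ V = 2) (hg₁ : MapsLinesToPointsOrLines g)
    (hg₂ : InjOnLinesWithLineImage g) {x y w : V} (hxy : g x ≠ g y)
    (hw : g w ∉ lineThrough (g x) (g y)) : range g = planeThrough (g x) (g y) (g w) := by
  have hw' : w ∉ lineThrough x y := fun h => hw (image_lineThrough hg₁ hxy ▸ mem_image_of_mem g h)
  refine Subset.antisymm ?_ ((isLineClosed_range hg₁).planeThrough_subset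
    (mem_range_self x) (mem_range_self y) (mem_range_self w))
  have hP := ((isLineClosed_planeThrough (g x) (g y) (g w)).preimage hg₁ hg₂).eq_univ hV
    (a := x) (b := y) (c := w) ⟨0, 0, by module⟩ ⟨1, 0, by module⟩ ⟨0, 1, by module⟩
    (fun h => hxy (congrArg g h)) hw'
  exact range_subset_iff.2 (eq_univ_iff_forall.1 hP)

lemma isPlane_or_isLine_or_isPoint_range (hV : Module.finrank ℝ V = 2)
    (hg₁ : MapsLinesToPointsOrLines g) (hg₂ : InjOnLinesWithLineImage g) :
    IsPlane (range g) ∨ IsLine (range g) ∨ IsPoint (range g) := by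
  by_cases hconst : ∃ x y, g x ≠ g y
  · obtain ⟨x, y, hxy⟩ := hconst
    by_cases hplane : ∃ w, g w ∉ lineThrough (g x) (g y)
    · obtain ⟨w, hw⟩ := hplane
      exact Or.inl (range_eq_planeThrough hV hg₁ hg₂ hxy hw ▸ isPlane_planeThrough hxy hw)
    · push Not at hplane
      have hrange : range g = lineThrough (g x) (g y) := Subset.antisymm
        (range_subset_iff.2 hplane)
        (isLineClosed_range hg₁ (mem_range_self x) (mem_range_self y))
      exact Or.inr (Or.inl (hrange ▸ isLine_lineThrough hxy))
  · push Not at hconst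
    exact Or.inr (Or.inr ⟨g 0, range_eq_singleton_iff.2 fun x => hconst x 0⟩)

lemma injective_of_isPlane_range (hV : Module.finrank ℝ V = 2) (hg₁ : MapsLinesToPointsOrLines g)
    (hg₂ : InjOnLinesWithLineImage g) (hP : IsPlane (range g)) : Injective g := by
  by_contra hg
  obtain ⟨_, ⟨x, rfl⟩, _, ⟨y, rfl⟩, _, ⟨w, rfl⟩, hxy, hw⟩ := hP.exists_notMem_lineThrough
  exact hw (mem_lineThrough_of_not_injective hV hg₁ hg₂ hg hxy)

end PlaneDomain

theorem image_of_plane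
    {X Y : Type*} [AddCommGroup X] [Module ℝ X] [AddCommGroup Y] [Module ℝ Y]
    (f : X → Y)
    (h1 : ∀ L : Set X, IsLine L → IsPoint (f '' L) ∨ IsLine (f '' L))
    (h2 : ∀ L : Set X, IsLine L → IsLine (f '' L) → Set.InjOn f L) :
    ∀ E : Set X, IsPlane E →
      (IsPlane (f '' E) ∨ IsLine (f '' E) ∨ IsPoint (f '' E)) ∧
        (IsPlane (f '' E) → Set.InjOn f E) := by
  rintro E ⟨o, d₁, d₂, hind, rfl⟩
  let φ : (Fin 2 → ℝ) →ᵃ[ℝ] X :=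
    (Fintype.linearCombination ℝ ![d₁, d₂]).toAffineMap + AffineMap.const ℝ _ o
  have hφ : Injective φ := fun c c' h =>
    (LinearIndependent.pair_iff.2 hind).fintypeLinearCombination_injective (add_right_cancel h)
  have hE : {x | ∃ r s : ℝ, x = r • d₁ + s • d₂ + o} = range φ := by
    ext x
    simp [φ, Fintype.linearCombination_apply, Fin.sum_univ_two, Fin.exists_fin_succ_pi, eq_comm]
  have hV : Module.finrank ℝ (Fin 2 → ℝ) = 2 := Module.finrank_fin_fun ℝ
  have hg₁ := MapsLinesToPointsOrLines.comp h1 hφ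
  have hg₂ := InjOnLinesWithLineImage.comp h2 hφ
  rw [hE, ← range_comp]
  exact ⟨isPlane_or_isLine_or_isPoint_range hV hg₁ hg₂,
    fun hP => (injective_of_isPlane_range hV hg₁ hg₂ hP).injOn_range⟩
end

section
/- Let X and Y be vector spaces over ℝ and let g : X → Y satisfy: there exist a*, a₀*, a₁* ∈ X such that g(a₀*) - g(a*) and g(a₁*) - g(a*) are linearly independent in Y. Then g is an affine mapping if and only if g satisfies both: (i) for every line L ⊆ X, the image g '' L is either a point or a line in Y, and (ii) for every line L ⊆ X, if g '' L is a line in Y then the restriction of g to L is injective. -/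
/-- `g` is an affine mapping: a linear map plus a constant. -/
def IsAffineMapping {X Y : Type*} [AddCommGroup X] [Module ℝ X]
    [AddCommGroup Y] [Module ℝ Y] (g : X → Y) : Prop :=
  ∃ (f : X → Y) (b : Y),
    (∀ (c : ℝ) (a : X), f (c • a) = c • f a) ∧
    (∀ a a' : X, f (a + a') = f a + f a') ∧
    (∀ a : X, g a = f a + b)

/-!
On each line `g` is either constant or a bijection onto a line, so
`g (p + t • v) = g p + σ t • (g (p + v) - g p)` for a reparametrization `σ` of `ℝ`, and it
suffices to show `σ = id`. By the independence hypothesis some `c` has `g c` off the image line;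
work in the plane `o + ℝ • u + ℝ • w` with `o = p`, `u = v`, `w = c - p`. A point
`o + x • u + y • w` with `y ≠ 0` lies on lines joining the `w`-axis to different points of the
`u`-axis, so its image is off the image of the `u`-axis. Hence the image of a line parallel to `u`,
which lies in the plane of the images, is parallel to the image of the `u`-axis, i.e.
`g (o + x • u + y • w) = g (o + x • u) + g (o + y • w) - g o`. On the line through `o + s • u` and
`o + s' • u + w` this gives `φ (s + t * (s' - s)) = φ s + φ t * (φ s' - φ s)` for the
reparametrization `φ` of the `u`-axis, so `φ` is a ring endomorphism of `ℝ`, hence `φ = id`.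
-/

theorem Real.eq_id_of_map_mul_of_map_one_sub {φ : ℝ → ℝ} (h1 : φ 1 = 1)
    (hmul : ∀ x y, φ (x * y) = φ x * φ y) (hsub : ∀ x, φ (1 - x) = 1 - φ x) (x : ℝ) :
    φ x = x := by
  have h0 : φ 0 = 0 := by simpa [h1] using hsub 1
  have hneg1 : φ (-1) = -1 := by
    have hsq : φ (-1) * φ (-1) = 1 := by rw [← hmul]; norm_num [h1]
    rcases mul_self_eq_one_iff.mp hsq with h | h
    · -- `φ (-1) = 1` would give `φ 2 = 0`, hence `φ 1 = φ 2 * φ (1 / 2) = 0`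
      have h2 : φ 2 = 0 := by have := hsub (-1); norm_num at this; linarith
      have := hmul 2 (1 / 2)
      norm_num [h2, h1] at this
    · exact h
  have hneg : ∀ y, φ (-y) = -φ y := fun y => by
    rw [neg_eq_neg_one_mul, hmul, hneg1, neg_one_mul]
  have hadd : ∀ a b, φ (a + b) = φ a + φ b := by
    intro a b
    rcases eq_or_ne a 0 with rfl | ha
    · simp [h0]
    calc φ (a + b) = φ (a * (1 - -(b / a))) := by congr 1; field_simp; ring
      _ = φ a + φ (a * (b / a)) := by rw [hmul, hsub, hneg, hmul a]; ring
      _ = φ a + φ b := by rw [mul_div_cancel₀ b ha]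
  exact Real.ringHom_apply
    ({ toFun := φ, map_one' := h1, map_mul' := hmul, map_zero' := h0, map_add' := hadd } :
      ℝ →+* ℝ) x

theorem exists_linearIndependent_pair {α Y : Type*} [AddCommGroup Y] [Module ℝ Y] {g : α → Y}
    (hind : ∃ a₀ a₁ a₂ : α, LinearIndependent ℝ ![g a₁ - g a₀, g a₂ - g a₀])
    {U : Y} (hU : U ≠ 0) (P : Y) : ∃ c : α, LinearIndependent ℝ ![U, g c - P] := by
  obtain ⟨a₀, a₁, a₂, hind⟩ := hind
  by_contra! hc
  simp_rw [LinearIndependent.pair_iff' hU, not_forall, not_not] at hc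
  obtain ⟨r₀, hr₀⟩ := hc a₀
  obtain ⟨r₁, hr₁⟩ := hc a₁
  obtain ⟨r₂, hr₂⟩ := hc a₂
  have hr := hind.eq_zero_of_pair (s := r₂ - r₀) (t := r₀ - r₁)
    (by linear_combination (norm := module) (r₀ - r₂) • (hr₁ - hr₀) + (r₁ - r₀) • (hr₂ - hr₀))
  refine hind.ne_zero 0 ?_
  simp only [Matrix.cons_val_zero]
  linear_combination (norm := module) -(hr₁ - hr₀) - hr.2 • U

section LineSets

variable {X Y : Type*} [AddCommGroup X] [Module ℝ X] [AddCommGroup Y] [Module ℝ Y] {g : X → Y}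

theorem IsLine.nontrivial {L : Set X} (hL : IsLine L) : L.Nontrivial := by
  obtain ⟨o, d, hd, rfl⟩ := hL
  exact ⟨0 • d + o, ⟨0, rfl⟩, 1 • d + o, ⟨1, rfl⟩, by simpa using hd⟩

theorem IsLine.eq_setOf_add_smul {M : Set X} (hM : IsLine M) {P Q : X} (hP : P ∈ M) (hQ : Q ∈ M)
    (hPQ : P ≠ Q) : M = {y | ∃ s : ℝ, y = P + s • (Q - P)} := by
  obtain ⟨o, d, -, rfl⟩ := hM
  obtain ⟨r₁, rfl⟩ := hP
  obtain ⟨r₂, rfl⟩ := hQ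
  have hr : r₂ - r₁ ≠ 0 := sub_ne_zero.mpr fun h => hPQ (by rw [h])
  ext y
  constructor
  · rintro ⟨r, rfl⟩
    exact ⟨(r - r₁) / (r₂ - r₁), by match_scalars <;> field_simp <;> ring⟩
  · rintro ⟨s, rfl⟩
    exact ⟨r₁ + s * (r₂ - r₁), by module⟩

end LineSets

namespace IsAffineMapping

variable {X Y : Type*} [AddCommGroup X] [Module ℝ X] [AddCommGroup Y] [Module ℝ Y] {g : X → Y}
  (hg : IsAffineMapping g)
include hg

theorem apply_smul_add (o d : X) (r : ℝ) : g (r • d + o) = r • (g (d + o) - g o) + g o := by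
  obtain ⟨f, b, hsmul, hadd, hgf⟩ := hg
  simp only [hgf, hadd, hsmul]
  module

theorem image_setOf_smul_add (o d : X) :
    g '' {x | ∃ r : ℝ, x = r • d + o} = {y | ∃ r : ℝ, y = r • (g (d + o) - g o) + g o} := by
  ext y
  constructor
  · rintro ⟨x, ⟨r, rfl⟩, rfl⟩
    exact ⟨r, hg.apply_smul_add o d r⟩
  · rintro ⟨r, rfl⟩
    exact ⟨r • d + o, ⟨r, rfl⟩, hg.apply_smul_add o d r⟩

theorem image_isLine {L : Set X} (hL : IsLine L) : IsPoint (g '' L) ∨ IsLine (g '' L) := by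
  obtain ⟨o, d, -, rfl⟩ := hL
  rw [hg.image_setOf_smul_add]
  by_cases he : g (d + o) - g o = 0
  · exact Or.inl ⟨g o, by simp [he]⟩
  · exact Or.inr ⟨g o, _, he, rfl⟩

theorem injOn_of_isLine {L : Set X} (hL : IsLine L) (hM : IsLine (g '' L)) : Set.InjOn g L := by
  obtain ⟨o, d, -, rfl⟩ := hL
  have he : g (d + o) - g o ≠ 0 := by
    intro he
    have hM' := hM.nontrivial
    simp [hg.image_setOf_smul_add, he] at hM'
  rintro _ ⟨r, rfl⟩ _ ⟨r', rfl⟩ h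
  rw [hg.apply_smul_add, hg.apply_smul_add] at h
  rw [smul_left_injective ℝ he (add_right_cancel h)]

end IsAffineMapping

section

variable {X Y : Type*} [AddCommGroup X] [Module ℝ X] [AddCommGroup Y] [Module ℝ Y] {g : X → Y}

theorem isAffineMapping_of_apply_add_smul
    (h : ∀ (p v : X) (t : ℝ), g (p + t • v) = g p + t • (g (p + v) - g p)) :
    IsAffineMapping g := by
  refine ⟨fun x => g x - g 0, g 0, fun c a => ?_, fun a a' => ?_,
    fun a => (sub_add_cancel _ _).symm⟩
  · have hsmul := h 0 a c
    simp only [zero_add] at hsmul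
    simp only [hsmul]
    abel
  -- `a + a'` is twice the midpoint of `a` and `a'`
  have hmid := h a (a' - a) (1 / 2)
  have hdouble := h 0 (a + (1 / 2 : ℝ) • (a' - a)) 2
  rw [add_sub_cancel] at hmid
  rw [show (0 : X) + (2 : ℝ) • (a + (1 / 2 : ℝ) • (a' - a)) = a + a' by module, zero_add,
    hmid] at hdouble
  simp only [hdouble]
  module

end

section Lines

variable {X Y : Type*} [AddCommGroup X] [Module ℝ X] [AddCommGroup Y] [Module ℝ Y]

structure PreservesLines (g : X → Y) : Prop where
  mapsTo : ∀ (p v : X) (t : ℝ), ∃ s : ℝ, g (p + t • v) = g p + s • (g (p + v) - g p)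
  surjOn : ∀ (p v : X) (s : ℝ), ∃ t : ℝ, g (p + t • v) = g p + s • (g (p + v) - g p)
  injective : ∀ p v : X, g p ≠ g (p + v) → Function.Injective fun t : ℝ => g (p + t • v)

section OfIsLine

variable {g : X → Y} (hP : ∀ L : Set X, IsLine L → IsPoint (g '' L) ∨ IsLine (g '' L))
  (hI : ∀ L : Set X, IsLine L → IsLine (g '' L) → Set.InjOn g L)
include hP hI

theorem apply_add_smul_const_or_injective (p v : X) :
    (∀ t : ℝ, g (p + t • v) = g p) ∨
      (Function.Injective (fun t : ℝ => g (p + t • v)) ∧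
        g '' {x | ∃ r : ℝ, x = r • v + p} = {y | ∃ s : ℝ, y = g p + s • (g (p + v) - g p)}) := by
  rcases eq_or_ne v 0 with rfl | hv
  · simp
  have hL : IsLine {x | ∃ r : ℝ, x = r • v + p} := ⟨p, v, hv, rfl⟩
  have hmem (t : ℝ) : g (p + t • v) ∈ g '' {x | ∃ r : ℝ, x = r • v + p} :=
    ⟨p + t • v, ⟨t, add_comm _ _⟩, rfl⟩
  rcases hP _ hL with ⟨P, hPt⟩ | hM
  · left
    intro t
    have ht := hmem t
    have h0 := hmem 0
    rw [hPt, Set.mem_singleton_iff] at ht h0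
    rw [ht, ← h0, zero_smul, add_zero]
  · right
    have hinj : Function.Injective fun t : ℝ => g (p + t • v) := fun t t' h =>
      smul_left_injective ℝ hv
        (add_left_cancel (hI _ hL hM ⟨t, add_comm _ _⟩ ⟨t', add_comm _ _⟩ h))
    refine ⟨hinj, hM.eq_setOf_add_smul (by simpa using hmem 0) (by simpa using hmem 1) ?_⟩
    exact fun h => zero_ne_one (hinj (by simpa using h))

theorem preservesLines_of_isLine : PreservesLines g := by
  refine ⟨fun p v t => ?_, fun p v s => ?_, fun p v hne => ?_⟩ <;>
    rcases apply_add_smul_const_or_injective hP hI p v with hc | ⟨hinj, himg⟩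
  · exact ⟨0, by rw [hc, zero_smul, add_zero]⟩
  · have ht : g (p + t • v) ∈ g '' {x | ∃ r : ℝ, x = r • v + p} := ⟨_, ⟨t, add_comm _ _⟩, rfl⟩
    rwa [himg] at ht
  · have h1 := hc 1
    rw [one_smul] at h1
    exact ⟨0, by rw [hc, h1, sub_self, smul_zero, add_zero]⟩
  · have hs : g p + s • (g (p + v) - g p) ∈ g '' {x | ∃ r : ℝ, x = r • v + p} := himg ▸ ⟨s, rfl⟩
    obtain ⟨x, ⟨r, rfl⟩, hx⟩ := hs
    exact ⟨r, by rwa [add_comm]⟩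
  · exact absurd (by simpa using (hc 1).symm) hne
  · exact hinj

end OfIsLine

namespace PreservesLines

variable {g : X → Y} (hg : PreservesLines g)
include hg

theorem apply_add_smul_of_apply_eq {p v : X} (h : g p = g (p + v)) (t : ℝ) :
    g (p + t • v) = g p := by
  obtain ⟨s, hs⟩ := hg.mapsTo p v t
  rw [hs, ← h, sub_self, smul_zero, add_zero]

theorem eq_zero_of_apply_eq {p v : X} (hv : g p ≠ g (p + v)) {t : ℝ}
    (h : g (p + t • v) = g p) : t = 0 :=
  hg.injective p v hv (by simpa using h)

section Plane

variable {o u w : X}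

theorem exists_apply_add_add_eq_add_smul_sub {t : ℝ} (ht0 : t ≠ 0) (ht1 : t ≠ 1) (x y : ℝ) :
    ∃ s : ℝ, g (o + x • u + y • w) = g (o + (x / (1 - t)) • u) +
      s • (g (o + (y / t) • w) - g (o + (x / (1 - t)) • u)) := by
  have ht1' : 1 - t ≠ 0 := sub_ne_zero.mpr (Ne.symm ht1)
  obtain ⟨s, hs⟩ := hg.mapsTo (o + (x / (1 - t)) • u) ((y / t) • w - (x / (1 - t)) • u) t
  have hpt : o + (x / (1 - t)) • u + t • ((y / t) • w - (x / (1 - t)) • u) = o + x • u + y • w := by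
    match_scalars <;> field_simp
    ring
  exact ⟨s, by rwa [hpt, add_add_sub_cancel] at hs⟩

theorem exists_apply_add_add_eq (x y : ℝ) :
    ∃ α β : ℝ, g (o + x • u + y • w) = g o + α • (g (o + u) - g o) + β • (g (o + w) - g o) := by
  obtain ⟨s, hs⟩ := hg.exists_apply_add_add_eq_add_smul_sub (o := o) (u := u) (w := w)
    (t := 1 / 2) (by norm_num) (by norm_num) x y
  obtain ⟨a, ha⟩ := hg.mapsTo o u (x / (1 - 1 / 2))
  obtain ⟨b, hb⟩ := hg.mapsTo o w (y / (1 / 2))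
  exact ⟨(1 - s) * a, s * b, by rw [hs, ha, hb]; module⟩

variable (hUW : LinearIndependent ℝ ![g (o + u) - g o, g (o + w) - g o])
include hUW

theorem eq_div_of_apply_add_add_eq {t : ℝ} (ht0 : t ≠ 0) (ht1 : t ≠ 1) {x y x' : ℝ}
    (hy : y ≠ 0) (h : g (o + x • u + y • w) = g (o + x' • u)) : x' = x / (1 - t) := by
  have hu : g o ≠ g (o + u) := fun h => hUW.ne_zero 0 (by simp [h])
  have hw : g o ≠ g (o + w) := fun h => hUW.ne_zero 1 (by simp [h])
  obtain ⟨s, hs⟩ := hg.exists_apply_add_add_eq_add_smul_sub (o := o) (u := u) (w := w) ht0 ht1 x y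
  obtain ⟨a, ha⟩ := hg.mapsTo o u (x / (1 - t))
  obtain ⟨b, hb⟩ := hg.mapsTo o w (y / t)
  obtain ⟨a', ha'⟩ := hg.mapsTo o u x'
  rw [h, ha', ha, hb] at hs
  have hcoef := hUW.eq_of_pair (s := a') (t := 0) (s' := (1 - s) * a) (t' := s * b)
    (by linear_combination (norm := module) hs)
  have hb0 : b ≠ 0 := by
    rintro rfl
    exact div_ne_zero hy ht0 (hg.eq_zero_of_apply_eq hw (by simpa using hb))
  have hs0 : s = 0 := by simpa [hb0] using hcoef.2.symm
  apply hg.injective o u hu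
  simp only [ha', ha, hcoef.1, hs0, sub_zero, one_mul]

theorem eq_zero_of_apply_add_add_eq {x y x' : ℝ} (h : g (o + x • u + y • w) = g (o + x' • u)) :
    y = 0 := by
  by_contra hy
  have h2 := hg.eq_div_of_apply_add_add_eq hUW (t := 1 / 2) (by norm_num) (by norm_num) hy h
  have h3 := hg.eq_div_of_apply_add_add_eq hUW (t := 1 / 3) (by norm_num) (by norm_num) hy h
  norm_num at h2 h3
  have hx : x = 0 := by linarith
  have hx' : x' = 0 := by linarith
  subst hx hx'
  have hw : g o ≠ g (o + w) := fun h => hUW.ne_zero 1 (by simp [h])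
  exact hy (hg.eq_zero_of_apply_eq hw (by simpa using h))

theorem exists_apply_add_add_eq_apply_add_smul (x y : ℝ) :
    ∃ r : ℝ, g (o + x • u + y • w) = g (o + y • w) + r • (g (o + u) - g o) := by
  rcases eq_or_ne y 0 with rfl | hy
  · simpa using hg.mapsTo o u x
  obtain ⟨α, β, hαβ⟩ := hg.exists_apply_add_add_eq (o := o) (u := u) (w := w) x y
  obtain ⟨b, hb⟩ := hg.mapsTo o w y
  by_cases hβ : β = b
  · exact ⟨α, by rw [hαβ, hb, hβ]; module⟩
  -- otherwise the image of the line `o + y • w + ℝ • u` crosses the image of `o + ℝ • u`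
  have hbβ : b - β ≠ 0 := sub_ne_zero.mpr (Ne.symm hβ)
  obtain ⟨t, ht⟩ := hg.surjOn (o + y • w) (x • u) (b / (b - β))
  obtain ⟨t', ht'⟩ := hg.surjOn o u (b / (b - β) * α)
  have hcross : g (o + (t * x) • u + y • w) = g (o + t' • u) := by
    have hpv : o + y • w + x • u = o + x • u + y • w := add_right_comm _ _ _
    have hW : b + b / (b - β) * (β - b) = 0 := by field_simp; ring
    rw [show o + (t * x) • u + y • w = o + y • w + t • (x • u) by module, ht, hpv, hαβ, hb, ht']
    linear_combination (norm := module) hW • (g (o + w) - g o)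
  exact absurd (hg.eq_zero_of_apply_add_add_eq hUW hcross) hy

theorem apply_add_add (x y : ℝ) :
    g (o + x • u + y • w) = g (o + x • u) + g (o + y • w) - g o := by
  obtain ⟨r, hr⟩ := hg.exists_apply_add_add_eq_apply_add_smul hUW x y
  obtain ⟨r', hr'⟩ := hg.exists_apply_add_add_eq_apply_add_smul (o := o) (u := w) (w := u)
    (LinearIndependent.pair_symm_iff.mp hUW) y x
  obtain ⟨a, ha⟩ := hg.mapsTo o u x
  obtain ⟨b, hb⟩ := hg.mapsTo o w y
  rw [add_right_comm, hr] at hr'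
  rw [ha, hb] at hr' ⊢
  have hra := (hUW.eq_of_pair (s := r) (t := b) (s' := a) (t' := r')
    (by linear_combination (norm := module) hr')).1
  rw [hr, hb, hra]
  abel

theorem map_add_mul_sub {φ ψ : ℝ → ℝ} (hφ : ∀ t, g (o + t • u) = g o + φ t • (g (o + u) - g o))
    (hψ : ∀ t, g (o + t • w) = g o + ψ t • (g (o + w) - g o)) (s s' t : ℝ) :
    φ (s + t * (s' - s)) = φ s + ψ t * (φ s' - φ s) := by
  have h1 := hψ 1
  rw [one_smul] at h1
  have hψ1 : ψ 1 = 1 := (hUW.eq_of_pair (s := 0) (t := ψ 1) (s' := 0) (t' := 1)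
    (by linear_combination (norm := module) -h1)).2
  obtain ⟨σ, hσ⟩ := hg.mapsTo (o + s • u) ((s' - s) • u + w) t
  rw [show o + s • u + t • ((s' - s) • u + w) = o + (s + t * (s' - s)) • u + t • w by module,
    show o + s • u + ((s' - s) • u + w) = o + s' • u + (1 : ℝ) • w by module,
    hg.apply_add_add hUW, hg.apply_add_add hUW, hφ, hφ, hφ, hψ, hψ, hψ1] at hσ
  have hcoef := hUW.eq_of_pair (s := φ (s + t * (s' - s))) (t := ψ t)
    (s' := φ s + σ * (φ s' - φ s)) (t' := σ) (by linear_combination (norm := module) hσ)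
  rw [hcoef.1, hcoef.2]

theorem apply_add_smul_of_linearIndependent (t : ℝ) :
    g (o + t • u) = g o + t • (g (o + u) - g o) := by
  choose φ hφ using hg.mapsTo o u
  choose ψ hψ using hg.mapsTo o w
  have h0 := hφ 0
  have h1 := hφ 1
  rw [zero_smul, add_zero] at h0
  rw [one_smul] at h1
  have hφ0 : φ 0 = 0 := (hUW.eq_of_pair (s := φ 0) (t := 0) (s' := 0) (t' := 0)
    (by linear_combination (norm := module) -h0)).1
  have hφ1 : φ 1 = 1 := (hUW.eq_of_pair (s := φ 1) (t := 0) (s' := 1) (t' := 0)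
    (by linear_combination (norm := module) -h1)).1
  have hstar := hg.map_add_mul_sub hUW hφ hψ
  have hφψ : ∀ t, ψ t = φ t := fun t => by simpa [hφ0, hφ1] using (hstar 0 1 t).symm
  have hmul : ∀ x y, φ (x * y) = φ x * φ y := fun x y => by
    simpa [hφ0, hφψ, mul_comm] using hstar 0 y x
  have hsub : ∀ x, φ (1 - x) = 1 - φ x := fun x => by
    simpa [hφ0, hφ1, hφψ, sub_eq_add_neg] using hstar 1 0 x
  rw [hφ, Real.eq_id_of_map_mul_of_map_one_sub hφ1 hmul hsub]

end Plane

theorem apply_add_smul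
    (hind : ∃ a₀ a₁ a₂ : X, LinearIndependent ℝ ![g a₁ - g a₀, g a₂ - g a₀]) (p v : X) (t : ℝ) :
    g (p + t • v) = g p + t • (g (p + v) - g p) := by
  by_cases h : g p = g (p + v)
  · rw [hg.apply_add_smul_of_apply_eq h, ← h, sub_self, smul_zero, add_zero]
  obtain ⟨c, hc⟩ := exists_linearIndependent_pair hind (sub_ne_zero.mpr (Ne.symm h)) (g p)
  exact hg.apply_add_smul_of_linearIndependent (w := c - p) (by rwa [add_sub_cancel]) t

end PreservesLines

end Lines

theorem affine_iff_line_preserving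
    {X Y : Type*} [AddCommGroup X] [Module ℝ X] [AddCommGroup Y] [Module ℝ Y]
    (g : X → Y)
    (hind : ∃ astar a₀ a₁ : X, ∀ r s : ℝ,
      r • (g a₀ - g astar) + s • (g a₁ - g astar) = 0 → r = 0 ∧ s = 0) :
    IsAffineMapping g ↔
      ((∀ L : Set X, IsLine L → IsPoint (g '' L) ∨ IsLine (g '' L)) ∧
        (∀ L : Set X, IsLine L → IsLine (g '' L) → Set.InjOn g L)) := by
  refine ⟨fun hg => ⟨fun _ => hg.image_isLine, fun _ => hg.injOn_of_isLine⟩, fun ⟨hP, hI⟩ => ?_⟩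
  obtain ⟨astar, a₀, a₁, hind⟩ := hind
  exact isAffineMapping_of_apply_add_smul ((preservesLines_of_isLine hP hI).apply_add_smul
    ⟨astar, a₀, a₁, LinearIndependent.pair_iff.mpr hind⟩)
end

section
/- Let X and Y be vector spaces over ℝ and let g : X → Y satisfy: there exist a*, a₀*, a₁* ∈ X such that g(a₀*) - g(a*) and g(a₁*) - g(a*) are linearly independent in Y. Then g is an affine mapping if and only if g satisfies both: (i) for every line L ⊆ X, the image g '' L is either a point or a line in Y, and (ii) for all a, b, c ∈ X with c in the open segment between a and b, either g(a) = g(b) = g(c), or g(c) lies in the open segment between g(a) and g(b). -/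
/-- `c` lies in the open segment between `a` and `b`. -/
def InOpenSegment {X : Type*} [AddCommGroup X] [Module ℝ X] (a b c : X) : Prop :=
  ∃ t : ℝ, 0 < t ∧ t < 1 ∧ c = t • (b - a) + a

/-!
Segment preservation puts every point of `g '' A`, for a line `A`, on an open ray from `g q`
through the image of the midpoint of `a ∈ A` and `q`. If `B` is parallel to `A` through `q`, these
midpoints run over the parallel line `Z` halfway between `A` and `B`, so `g '' A` lies in an open
half-plane bounded by the line `g '' Z` and must be parallel to it; likewise `g '' B`, so `g` maps
parallel lines to parallel lines. Applied to the sides of a parallelogram with non-degenerate image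
this gives `g (a + b - c) = g a + g b - g c`. Independence provides, for any `a, b` with
`g a ≠ g b`, a `c` making the image of `a, b, c` non-degenerate; comparing where the images of the
two diagonals `[a, b]` and `[c, a + b - c]` meet shows that `g` preserves midpoints, hence
`f = g - g 0` is additive. Finally `t ↦ f (t • x) - t • f x` is additive, vanishes on `ℤ`, and is a
multiple of `f x` with coefficient in `[-1, 1]` on `[0, 1)`, so it vanishes identically.
-/

section LinearAlgebra

variable {Y : Type*} [AddCommGroup Y] [Module ℝ Y]

theorem span_singleton_eq_of_mem_of_ne_zero {x y : Y} (h : x ∈ ℝ ∙ y) (hx : x ≠ 0) :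
    ℝ ∙ x = ℝ ∙ y := by
  obtain ⟨k, rfl⟩ := Submodule.mem_span_singleton.mp h
  exact Submodule.span_singleton_smul_eq (isUnit_iff_ne_zero.mpr (left_ne_zero_of_smul hx)) y

theorem mem_span_of_line_subset_halfPlane {d o e u c : Y}
    (h : ∀ r : ℝ, ∃ α τ : ℝ, 0 < τ ∧ r • d + o = α • e + τ • u + c) : d ∈ ℝ ∙ e := by
  choose α τ hτ heq using h
  have hd : d = (α 1 - α 0) • e + (τ 1 - τ 0) • u := by
    linear_combination (norm := module) heq 1 - heq 0
  by_cases hu : u ∈ ℝ ∙ e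
  · rw [hd]
    exact add_mem (Submodule.smul_mem _ _ (Submodule.mem_span_singleton_self e))
      (Submodule.smul_mem _ _ hu)
  -- a functional `φ` killing `e` but not `u` is affine in `r` along the line and has the constant
  -- sign of `φ u` there, so it is constant on the line
  obtain ⟨φ, hφu, hφe⟩ := Submodule.exists_dual_map_eq_bot_of_notMem hu inferInstance
  have hφe : φ e = 0 := by
    simpa [hφe] using Submodule.mem_map_of_mem (f := φ) (Submodule.mem_span_singleton_self e)
  have hφ : ∀ r, τ r * φ u = r * φ d + (φ o - φ c) := by
    intro r
    have := congrArg φ (heq r)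
    simp only [map_add, map_smul, hφe, smul_eq_mul] at this
    linarith
  have hφd : φ d = 0 := by
    by_contra hφd
    have := hφ (-(φ o - φ c) / φ d)
    rw [div_mul_cancel₀ _ hφd, neg_add_cancel] at this
    exact mul_ne_zero (hτ _).ne' hφu this
  have hτ10 : τ 1 - τ 0 = 0 := by
    have := congrArg φ hd
    simp only [map_add, map_smul, hφe, hφd, smul_eq_mul] at this
    simpa [hφu] using this.symm
  rw [hd, hτ10, zero_smul, add_zero]
  exact Submodule.smul_mem _ _ (Submodule.mem_span_singleton_self e)

theorem sub_mem_span_of_range_eq {F : ℝ → Y} {o e : Y}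
    (h : Set.range F = Set.range fun r : ℝ => r • e + o) (t t' : ℝ) : F t - F t' ∈ ℝ ∙ e := by
  obtain ⟨r, hr⟩ := h.le ⟨t, rfl⟩
  obtain ⟨r', hr'⟩ := h.le ⟨t', rfl⟩
  exact Submodule.mem_span_singleton.mpr ⟨r - r', by rw [← hr, ← hr']; module⟩

theorem InOpenSegment.exists_eq_smul_sub_add {a b c : Y} (h : InOpenSegment a b c) :
    ∃ l : ℝ, 0 < l ∧ a = l • (c - b) + b := by
  obtain ⟨t, -, ht1, rfl⟩ := h
  have : 1 - t ≠ 0 := by linarith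
  refine ⟨(1 - t)⁻¹, inv_pos.mpr (by linarith), ?_⟩
  match_scalars <;> field_simp <;> ring

theorem exists_linearIndependent_sub {α : Type*} {g : α → Y} {x x₀ x₁ a b : α}
    (hind : LinearIndependent ℝ ![g x₀ - g x, g x₁ - g x]) (hab : g b ≠ g a) :
    ∃ c, LinearIndependent ℝ ![g c - g a, g b - g a] := by
  by_contra! h
  have hmem : ∀ c, g c - g a ∈ ℝ ∙ (g b - g a) := fun c => by
    have := h c
    rw [LinearIndependent.pair_symm_iff, LinearIndependent.pair_iff' (sub_ne_zero.mpr hab)] at this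
    simp only [not_forall, not_not] at this
    exact Submodule.mem_span_singleton.mpr this
  obtain ⟨k₀, hk₀⟩ := Submodule.mem_span_singleton.mp (sub_mem (hmem x₀) (hmem x))
  obtain ⟨k₁, hk₁⟩ := Submodule.mem_span_singleton.mp (sub_mem (hmem x₁) (hmem x))
  obtain ⟨-, h₀⟩ := hind.eq_zero_of_pair (s := k₁) (t := -k₀)
    (by linear_combination (norm := module) k₀ • hk₁ - k₁ • hk₀)
  obtain rfl : k₀ = 0 := neg_eq_zero.mp h₀
  exact hind.ne_zero 0 (by simpa using hk₀.symm)

theorem AddMonoidHom.eq_zero_of_forall_eq_smul_of_abs_le_one (h : ℝ →+ Y) (v : Y)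
    (hb : ∀ t, ∃ c : ℝ, |c| ≤ 1 ∧ h t = c • v) (t : ℝ) : h t = 0 := by
  obtain ⟨c, -, hc⟩ := hb t
  by_contra ht
  have hv : v ≠ 0 := right_ne_zero_of_smul (hc ▸ ht)
  have hc0 : 0 < |c| := abs_pos.mpr (left_ne_zero_of_smul (hc ▸ ht))
  obtain ⟨n, hn⟩ := exists_nat_gt |c|⁻¹
  obtain ⟨c', hc', hnc⟩ := hb (n • t)
  have : c' = n * c := smul_left_injective ℝ hv <|
    calc c' • v = n • h t := by rw [← hnc, map_nsmul]
      _ = (n * c) • v := by rw [hc, ← Nat.cast_smul_eq_nsmul ℝ, smul_smul]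
  rw [this, abs_mul, Nat.abs_cast] at hc'
  have := (inv_lt_iff_one_lt_mul₀ hc0).mp hn
  linarith

end LinearAlgebra

section AffineMaps

variable {X Y : Type*} [AddCommGroup X] [Module ℝ X] [AddCommGroup Y] [Module ℝ Y] {g : X → Y}

theorem inOpenSegment_midpoint (a b : X) : InOpenSegment a b (midpoint ℝ a b) :=
  ⟨1 / 2, by norm_num, by norm_num, by rw [midpoint_eq_smul_add, invOf_eq_inv]; module⟩

theorem IsAffineMapping.exists_linearMap (hg : IsAffineMapping g) :
    ∃ (F : X →ₗ[ℝ] Y) (b : Y), ∀ x, g x = F x + b := by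
  obtain ⟨f, b, hsmul, hadd, hg⟩ := hg
  exact ⟨{ toFun := f, map_add' := hadd, map_smul' := hsmul }, b, hg⟩

theorem IsAffineMapping.isPoint_or_isLine_image (hg : IsAffineMapping g) {L : Set X}
    (hL : IsLine L) : IsPoint (g '' L) ∨ IsLine (g '' L) := by
  obtain ⟨F, b, hg⟩ := hg.exists_linearMap
  obtain ⟨o, d, -, rfl⟩ := hL
  have himage : g '' {x | ∃ r : ℝ, x = r • d + o} = {y | ∃ r : ℝ, y = r • F d + (F o + b)} := by
    ext y
    simp only [Set.mem_image, Set.mem_ofPred_eq]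
    constructor
    · rintro ⟨_, ⟨r, rfl⟩, rfl⟩
      exact ⟨r, by rw [hg, map_add, map_smul, add_assoc]⟩
    · rintro ⟨r, rfl⟩
      exact ⟨_, ⟨r, rfl⟩, by rw [hg, map_add, map_smul, add_assoc]⟩
  by_cases hFd : F d = 0
  · exact .inl ⟨F o + b, by rw [himage, hFd]; ext; simp⟩
  · exact .inr ⟨_, _, hFd, himage⟩

theorem IsAffineMapping.inOpenSegment_apply (hg : IsAffineMapping g) {a b c : X}
    (h : InOpenSegment a b c) : InOpenSegment (g a) (g b) (g c) := by
  obtain ⟨F, b', hg⟩ := hg.exists_linearMap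
  obtain ⟨t, ht0, ht1, rfl⟩ := h
  exact ⟨t, ht0, ht1, by simp only [hg, map_add, map_smul, map_sub]; module⟩

/-- Lines may degenerate to points here (`d = 0`, `d' = 0`). -/
def PreservesLines_s15 (g : X → Y) : Prop :=
  ∀ o d : X, ∃ o' d' : Y,
    Set.range (fun r : ℝ => g (r • d + o)) = Set.range fun r : ℝ => r • d' + o'

/-- The alternative `g a = g b = g c` of the theorem is the degenerate case of this. -/
def PreservesOpenSegments (g : X → Y) : Prop :=
  ∀ a b c : X, InOpenSegment a b c → InOpenSegment (g a) (g b) (g c)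

theorem preservesLines_of_isLine_image
    (h : ∀ L : Set X, IsLine L → IsPoint (g '' L) ∨ IsLine (g '' L)) : PreservesLines_s15 g := by
  intro o d
  by_cases hd : d = 0
  · exact ⟨g o, 0, by simp [hd]⟩
  have himage : g '' {x | ∃ r : ℝ, x = r • d + o} = Set.range fun r : ℝ => g (r • d + o) := by
    ext
    simp [eq_comm]
  rcases h _ ⟨o, d, hd, rfl⟩ with ⟨p, hp⟩ | ⟨o', d', -, hl⟩
  · exact ⟨p, 0, by rw [← himage, hp]; simp⟩
  · exact ⟨o', d', by rw [← himage, hl]; ext; simp [eq_comm]⟩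

theorem preservesOpenSegments_of_forall_or
    (h : ∀ a b c : X, InOpenSegment a b c →
      (g a = g c ∧ g b = g c) ∨ InOpenSegment (g a) (g b) (g c)) :
    PreservesOpenSegments g := by
  intro a b c habc
  rcases h a b c habc with ⟨ha, hb⟩ | h
  · exact ⟨1 / 2, by norm_num, by norm_num, by rw [ha, hb, sub_self, smul_zero, zero_add]⟩
  · exact h

theorem mem_span_of_image_midline (hS : PreservesOpenSegments g) {p q d : X} {oA eA oZ eZ : Y}
    (hA : Set.range (fun r : ℝ => g (r • d + p)) = Set.range fun r : ℝ => r • eA + oA)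
    (hZ : Set.range (fun r : ℝ => g (r • d + midpoint ℝ p q)) =
      Set.range fun r : ℝ => r • eZ + oZ) :
    eA ∈ ℝ ∙ eZ := by
  refine mem_span_of_line_subset_halfPlane (o := oA) (u := oZ - g q) (c := g q) fun r => ?_
  obtain ⟨t, ht⟩ := hA.ge ⟨r, rfl⟩
  obtain ⟨ζ, hζ⟩ := hZ.le ⟨t / 2, rfl⟩
  have hm : InOpenSegment (t • d + p) q ((t / 2) • d + midpoint ℝ p q) :=
    ⟨1 / 2, by norm_num, by norm_num, by rw [midpoint_eq_smul_add, invOf_eq_inv]; module⟩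
  obtain ⟨l, hl, hgl⟩ := (hS _ _ _ hm).exists_eq_smul_sub_add
  refine ⟨l * ζ, l, hl, ?_⟩
  simp only at ht hζ
  rw [← ht, hgl, ← hζ]
  module

/-- `g` maps the parallel lines `a + ℝ (c - a)` and `e + ℝ (c - a)` to parallel lines. -/
theorem sub_mem_span_sub_of_sub_eq_sub (hL : PreservesLines_s15 g) (hS : PreservesOpenSegments g)
    {a b c e : X} (h : b - e = c - a) (hne : g c ≠ g a) : g b - g e ∈ ℝ ∙ (g c - g a) := by
  obtain ⟨oA, eA, hA⟩ := hL a (c - a)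
  obtain ⟨oB, eB, hB⟩ := hL e (c - a)
  obtain ⟨oZ, eZ, hZ⟩ := hL (midpoint ℝ a e) (c - a)
  have hAZ := mem_span_of_image_midline hS hA hZ
  have hBZ := mem_span_of_image_midline hS hB (midpoint_comm (R := ℝ) a e ▸ hZ)
  have hdiffA : g c - g a ∈ ℝ ∙ eA := by
    simpa using sub_mem_span_of_range_eq hA 1 0
  have hdiffB : g b - g e ∈ ℝ ∙ eB := by
    simpa [← h] using sub_mem_span_of_range_eq hB 1 0
  have heA : eA ≠ 0 := by
    rintro rfl
    exact hne (sub_eq_zero.mp (by simpa using hdiffA))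
  rw [span_singleton_eq_of_mem_of_ne_zero hdiffA (sub_ne_zero.mpr hne),
    span_singleton_eq_of_mem_of_ne_zero hAZ heA]
  exact (Submodule.span_singleton_le_iff_mem _ _).mpr hBZ hdiffB

theorem apply_add_sub_eq_of_linearIndependent (hL : PreservesLines_s15 g)
    (hS : PreservesOpenSegments g) {a b c : X}
    (hind : LinearIndependent ℝ ![g c - g a, g b - g a]) : g (a + b - c) = g a + g b - g c := by
  have hca : g c ≠ g a := fun h => by simpa [h] using hind.ne_zero 0
  have hbc : g b ≠ g c := fun h => by
    simpa using (hind.eq_zero_of_pair (s := 1) (t := -1) (by rw [h]; module)).1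
  obtain ⟨k₁, hk₁⟩ := Submodule.mem_span_singleton.mp <|
    sub_mem_span_sub_of_sub_eq_sub hL hS (b := b) (e := a + b - c) (by abel) hca
  obtain ⟨k₂, hk₂⟩ := Submodule.mem_span_singleton.mp <|
    sub_mem_span_sub_of_sub_eq_sub hL hS (b := a + b - c) (e := a) (by abel) hbc
  obtain ⟨h₁, h₂⟩ := hind.eq_zero_of_pair (s := k₁ - k₂) (t := k₂ - 1)
    (by linear_combination (norm := module) hk₁ + hk₂)
  obtain rfl : k₂ = 1 := by linarith
  linear_combination (norm := module) -hk₂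

theorem apply_midpoint (hL : PreservesLines_s15 g) (hS : PreservesOpenSegments g) {x x₀ x₁ : X}
    (hind : LinearIndependent ℝ ![g x₀ - g x, g x₁ - g x]) (a b : X) :
    g (midpoint ℝ a b) = midpoint ℝ (g a) (g b) := by
  obtain ⟨t, -, -, ht⟩ := hS _ _ _ (inOpenSegment_midpoint a b)
  by_cases hab : g b = g a
  · rw [ht, hab, sub_self, smul_zero, zero_add, midpoint_self]
  obtain ⟨c, hc⟩ := exists_linearIndependent_sub hind hab
  have hm : midpoint ℝ a b = midpoint ℝ c (a + b - c) := by
    simp only [midpoint_eq_smul_add, add_sub_cancel]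
  obtain ⟨s, -, -, hs⟩ := hS _ _ _ (hm ▸ inOpenSegment_midpoint c (a + b - c))
  rw [apply_add_sub_eq_of_linearIndependent hL hS hc] at hs
  obtain ⟨h₁, h₂⟩ := hc.eq_zero_of_pair (s := 1 - 2 * s) (t := s - t)
    (by linear_combination (norm := module) ht - hs)
  obtain rfl : t = 1 / 2 := by linarith
  rw [ht, midpoint_eq_smul_add, invOf_eq_inv]
  module

theorem AddMonoidHom.map_real_smul_of_forall_mem_Ioo (f : X →+ Y)
    (hf : ∀ x : X, ∀ t : ℝ, 0 < t → t < 1 → ∃ s : ℝ, 0 < s ∧ s < 1 ∧ f (t • x) = s • f x)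
    (t : ℝ) (x : X) : f (t • x) = t • f x := by
  let h : ℝ →+ Y := f.comp (LinearMap.toSpanSingleton ℝ X x).toAddMonoidHom -
    (LinearMap.toSpanSingleton ℝ Y (f x)).toAddMonoidHom
  have hh : ∀ t, h t = f (t • x) - t • f x := fun t => rfl
  have hint : ∀ n : ℤ, h n = 0 := fun n => by
    rw [← zsmul_one, map_zsmul, hh, one_smul, one_smul, sub_self, smul_zero]
  have hbound : ∀ t, ∃ c : ℝ, |c| ≤ 1 ∧ h t = c • f x := by
    intro t
    rw [← Int.floor_add_fract t, map_add, hint, zero_add]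
    rcases (Int.fract_nonneg t).eq_or_lt with h0 | h0
    · exact ⟨0, by simp, by rw [← h0, map_zero, zero_smul]⟩
    have h1 := Int.fract_lt_one t
    obtain ⟨s, hs0, hs1, hs⟩ := hf x _ h0 h1
    refine ⟨s - Int.fract t, abs_le.mpr ⟨by linarith, by linarith⟩, ?_⟩
    rw [hh, hs, sub_smul]
  exact sub_eq_zero.mp (h.eq_zero_of_forall_eq_smul_of_abs_le_one (f x) hbound t)

theorem isAffineMapping_of_preservesLines_of_preservesOpenSegments (hL : PreservesLines_s15 g)
    (hS : PreservesOpenSegments g) {x x₀ x₁ : X}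
    (hind : LinearIndependent ℝ ![g x₀ - g x, g x₁ - g x]) : IsAffineMapping g := by
  let f : X →+ Y := AddMonoidHom.ofMapMidpoint ℝ ℝ (fun x => g x - g 0) (sub_self _) fun a b => by
    show g (midpoint ℝ a b) - g 0 = midpoint ℝ (g a - g 0) (g b - g 0)
    rw [apply_midpoint hL hS hind]
    simp only [midpoint_eq_smul_add, invOf_eq_inv]
    module
  refine ⟨f, g 0, fun c a => f.map_real_smul_of_forall_mem_Ioo (fun a t ht0 ht1 => ?_) c a,
    map_add f, fun a => (sub_add_cancel _ _).symm⟩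
  obtain ⟨s, hs0, hs1, hs⟩ := hS 0 a (t • a) ⟨t, ht0, ht1, by rw [sub_zero, add_zero]⟩
  exact ⟨s, hs0, hs1, by simp [f, hs]⟩

end AffineMaps

theorem affine_iff_line_and_segment_preserving
    {X Y : Type*} [AddCommGroup X] [Module ℝ X] [AddCommGroup Y] [Module ℝ Y]
    (g : X → Y)
    (hind : ∃ astar a₀ a₁ : X, ∀ r s : ℝ,
      r • (g a₀ - g astar) + s • (g a₁ - g astar) = 0 → r = 0 ∧ s = 0) :
    IsAffineMapping g ↔
      ((∀ L : Set X, IsLine L → IsPoint (g '' L) ∨ IsLine (g '' L)) ∧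
        (∀ a b c : X, InOpenSegment a b c →
          (g a = g c ∧ g b = g c) ∨ InOpenSegment (g a) (g b) (g c))) := by
  refine ⟨fun hg => ⟨fun L hL => hg.isPoint_or_isLine_image hL,
    fun a b c h => .inr (hg.inOpenSegment_apply h)⟩, fun ⟨hL, hS⟩ => ?_⟩
  obtain ⟨x, x₀, x₁, hind⟩ := hind
  exact isAffineMapping_of_preservesLines_of_preservesOpenSegments
    (preservesLines_of_isLine_image hL) (preservesOpenSegments_of_forall_or hS)
    (LinearIndependent.pair_iff.mpr hind)
end

section
/- Let X and Y be vector spaces over ℝ and let f : X → Y. Then f is ℝ-linear if and only if f satisfies both: (i) f is additive, i.e. f(a + b) = f(a) + f(b) for all a, b ∈ X; and (ii) for all a, c ∈ X, if c lies in the open segment between a and 0, then either f(a) = f(c) = 0, or f(c) lies in the open segment between f(a) and 0. -/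
theorem linear_iff_additive_and_segment
    {X Y : Type*} [AddCommGroup X] [Module ℝ X] [AddCommGroup Y] [Module ℝ Y]
    (f : X → Y) :
    ((∀ (c : ℝ) (a : X), f (c • a) = c • f a) ∧
        (∀ a b : X, f (a + b) = f a + f b)) ↔
      ((∀ a b : X, f (a + b) = f a + f b) ∧
        (∀ a c : X, InOpenSegment a 0 c →
          (f a = 0 ∧ f c = 0) ∨ InOpenSegment (f a) 0 (f c))) := by
  constructor
  · rintro ⟨hsmul, hadd⟩
    refine ⟨hadd, ?_⟩
    rintro a c ⟨t, ht0, ht1, rfl⟩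
    right
    refine ⟨t, ht0, ht1, ?_⟩
    have h1 : t • ((0:X) - a) + a = (1 - t) • a := by module
    rw [h1, hsmul]
    module
  · rintro ⟨hadd, hseg⟩
    refine ⟨?_, hadd⟩
    set F : X →+ Y := AddMonoidHom.mk' f hadd with hF
    have hFf : ∀ x, F x = f x := fun _ => rfl
    have hnat : ∀ (n : ℕ) (x : X), f ((n : ℝ) • x) = (n : ℝ) • f x := by
      intro n x
      rw [Nat.cast_smul_eq_nsmul ℝ n x, Nat.cast_smul_eq_nsmul ℝ n (f x)]
      exact map_nsmul F n x
    have hrat : ∀ (q : ℚ) (x : X), 0 < q → f ((q : ℝ) • x) = (q : ℝ) • f x := by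
      intro q x hq
      have hd : ((q.den : ℝ)) ≠ 0 := by
        exact_mod_cast q.den_ne_zero
      have hnum : (0:ℤ) < q.num := Rat.num_pos.mpr hq
      obtain ⟨m, hm⟩ : ∃ m : ℕ, q.num = (m : ℤ) := ⟨q.num.toNat, (Int.toNat_of_nonneg hnum.le).symm⟩
      have hcast : (q : ℝ) = (m : ℝ) / (q.den : ℝ) := by
        rw [Rat.cast_def, hm]; push_cast; ring
      have h1 : (q.den : ℝ) • ((q : ℝ) • x) = (m : ℝ) • x := by
        rw [smul_smul, hcast]; congr 1; field_simp
      have h2 : (q.den : ℝ) • f ((q : ℝ) • x) = (q.den : ℝ) • ((q : ℝ) • f x) := by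
        rw [← hnat, h1, hnat, smul_smul, hcast]
        congr 1
        field_simp
      exact smul_right_injective Y hd h2
    have keylem : ∀ (r : ℝ) (a : X), 0 < r → r < 1 → f (r • a) = r • f a := by
      intro r a hr0 hr1
      by_cases hfa : f a = 0
      · -- show f (r • a) = 0
        have hc : InOpenSegment a 0 (r • a) := ⟨1 - r, by linarith, by linarith, by module⟩
        rcases hseg a _ hc with ⟨_, hfc⟩ | ⟨s, _, _, hfc⟩
        · rw [hfc, hfa, smul_zero]
        · rw [hfc, hfa, smul_zero]; simp
      · have exS : ∀ r : ℝ, 0 < r → r < 1 → ∃ s : ℝ, 0 < s ∧ s < 1 ∧ f (r • a) = s • f a := by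
          intro r hr0 hr1
          have hc : InOpenSegment a 0 (r • a) := ⟨1 - r, by linarith, by linarith, by module⟩
          rcases hseg a _ hc with ⟨hfa', _⟩ | ⟨s, hs0, hs1, hfc⟩
          · exact absurd hfa' hfa
          · refine ⟨1 - s, by linarith, by linarith, ?_⟩
            rw [hfc]; module
        have uniq : ∀ s t : ℝ, s • f a = t • f a → s = t := by
          intro s t h
          have h2 : (s - t) • f a = 0 := by rw [sub_smul, h, sub_self]
          rcases smul_eq_zero.mp h2 with h3 | h3
          · linarith [sub_eq_zero.mp (by linarith [h3] : s - t = 0)]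
          · exact absurd h3 hfa
        have mono : ∀ r r' s s' : ℝ, 0 < r → r < r' → r' < 1 →
            f (r • a) = s • f a → f (r' • a) = s' • f a → s < s' := by
          intro r r' s s' hr0 hrr hr1 h h'
          obtain ⟨d, hd0, _, hdf⟩ := exS (r' - r) (by linarith) (by linarith)
          have hsplit : f (r' • a) = f (r • a) + f ((r' - r) • a) := by
            rw [← hadd]; congr 1; module
          have heq : s' • f a = (s + d) • f a := by
            rw [← h', hsplit, h, hdf, add_smul]
          have := uniq _ _ heq
          linarith
        obtain ⟨s, hs0, hs1, hfc⟩ := exS r hr0 hr1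
        have hsr : s = r := by
          by_contra hne
          rcases lt_or_gt_of_ne hne with hlt | hgt
          · obtain ⟨q, hq1, hq2⟩ := exists_rat_btwn hlt
            have hq0 : (0:ℚ) < q := by exact_mod_cast lt_trans hs0 hq1
            have hqf := hrat q a hq0
            have := mono (q : ℝ) r (q : ℝ) s (by exact_mod_cast hq0) hq2 hr1 hqf hfc
            linarith
          · obtain ⟨q, hq1, hq2⟩ := exists_rat_btwn hgt
            have hq0 : (0:ℚ) < q := by exact_mod_cast lt_trans hr0 hq1
            have hq1' : (q:ℝ) < 1 := by linarith
            have hqf := hrat q a hq0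
            have := mono r (q : ℝ) s (q : ℝ) hr0 hq1 hq1' hfc hqf
            linarith
        rw [hfc, hsr]
    have hpos : ∀ (c : ℝ) (a : X), 0 < c → f (c • a) = c • f a := by
      intro c a hc
      obtain ⟨n, hn⟩ := exists_nat_gt c
      have hn0 : (0:ℝ) < n := lt_trans hc hn
      have hcn0 : 0 < c / n := div_pos hc hn0
      have hcn1 : c / n < 1 := (div_lt_one hn0).mpr hn
      have h1 : (n : ℝ) • ((c / n) • a) = c • a := by
        rw [smul_smul]; congr 1; field_simp
      calc f (c • a) = f ((n : ℝ) • ((c / n) • a)) := by rw [h1]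
        _ = (n : ℝ) • f ((c / n) • a) := hnat n _
        _ = (n : ℝ) • ((c / n) • f a) := by rw [keylem _ _ hcn0 hcn1]
        _ = c • f a := by rw [smul_smul]; congr 1; field_simp
    intro c a
    rcases lt_trichotomy c 0 with hc | hc | hc
    · have hneg : c • a = -((-c) • a) := by module
      rw [hneg, ← hFf, map_neg, hFf, hpos (-c) a (by linarith)]
      module
    · subst hc; simp [zero_smul, ← hFf, map_zero]
    · exact hpos c a hc
end
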